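/- Let p ≥ 1, 1 ≤ k < p, and let U₁ ∈ ℝ^{p×k} and U₂ ∈ ℝ^{p×(p−k)} have orthonormal columns with U₁ᵀU₂ = 0. Let φ_1, …, φ_n ∈ ℝ^p, ε_1, …, ε_n ∈ ℝ, β ∈ ℝ^p with β = U₁U₁ᵀβ, and δ_1, …, δ_n ∈ ℝ^p with δ_t = U₂U₂ᵀδ_t for each t. Set r_t := φ_tᵀ(β + δ_t) + ε_t, Σ̂ := Σ_{t=1}^n φ_t φ_tᵀ, and assume Σ̃ := U₁ᵀ Σ̂ U₁ is invertible. Define β̂ := U₁ Σ̃^{-1} Σ_{t=1}^n U₁ᵀ φ_t r_t. Then ‖β̂ − β‖_{Σ̂} ≤ ‖ Σ_{t=1}^n U₁ᵀ φ_t φ_tᵀ δ_t ‖_{Σ̃^{-1}} + ‖ Σ_{t=1}^n U₁ᵀ φ_t ε_t ‖_{Σ̃^{-1}}. -/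

import Mathlib

/-!
Since `β = U₁U₁ᵀβ`, the signal part of `∑ r_t U₁ᵀφ_t` is exactly `Σ̃ U₁ᵀβ`, so
`β̂ − β = U₁ Σ̃⁻¹ (v_δ + v_ε)` with `v_δ, v_ε` the two sums on the right. Then
`‖U₁ w‖_{Σ̂} = ‖w‖_{Σ̃}` and `‖Σ̃⁻¹ v‖_{Σ̃} = ‖v‖_{Σ̃⁻¹}`, and the triangle inequality for the
seminorm induced by the positive semidefinite `Σ̃⁻¹` splits the two terms.
-/

open Matrix

noncomputable def wnorm {k : ℕ} (A : Matrix (Fin k) (Fin k) ℝ) (x : Fin k → ℝ) : ℝ :=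
  Real.sqrt (x ⬝ᵥ A.mulVec x)

section WeightedNorm

variable {k : ℕ}

lemma wnorm_eq_norm {A : Matrix (Fin k) (Fin k) ℝ} (hA : A.PosSemidef) (x : Fin k → ℝ) :
    wnorm A x = @Norm.norm _ (A.toSeminormedAddCommGroup hA).toNorm x := by
  rw [wnorm, dotProduct_comm]
  rfl

lemma wnorm_add_le {A : Matrix (Fin k) (Fin k) ℝ} (hA : A.PosSemidef) (x y : Fin k → ℝ) :
    wnorm A (x + y) ≤ wnorm A x + wnorm A y := by
  simp only [wnorm_eq_norm hA]
  exact @norm_add_le _ (A.toSeminormedAddCommGroup hA).toSeminormedAddGroup x y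

lemma wnorm_transpose_mul_mul {p : ℕ} (A : Matrix (Fin p) (Fin p) ℝ)
    (U : Matrix (Fin p) (Fin k) ℝ) (w : Fin k → ℝ) : wnorm (Uᵀ * A * U) w = wnorm A (U *ᵥ w) := by
  rw [wnorm, wnorm, ← mulVec_mulVec, ← mulVec_mulVec, dotProduct_mulVec, vecMul_transpose]

lemma wnorm_nonsing_inv_mulVec {S : Matrix (Fin k) (Fin k) ℝ} (hS : S.IsSymm) (hSu : IsUnit S)
    (v : Fin k → ℝ) : wnorm S (S⁻¹ *ᵥ v) = wnorm S⁻¹ v := by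
  rw [wnorm, wnorm, mulVec_mulVec, mul_nonsing_inv _ ((isUnit_iff_isUnit_det S).mp hSu),
    one_mulVec, dotProduct_comm, dotProduct_mulVec, ← mulVec_transpose, transpose_nonsing_inv,
    hS.eq]

end WeightedNorm

lemma posSemidef_sum_vecMulVec_self {ι n : Type*} [Fintype ι] [Fintype n] (φ : ι → n → ℝ) :
    (∑ t, vecMulVec (φ t) (φ t)).PosSemidef :=
  posSemidef_sum _ fun t _ => by simpa using posSemidef_vecMulVec_self_star (φ t)

lemma sum_dotProduct_smul_mulVec {ι m n R : Type*} [Fintype ι] [Fintype n] [CommSemiring R]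
    (φ : ι → n → R) (M : Matrix m n R) (x : n → R) :
    ∑ t, (φ t ⬝ᵥ x) • (M *ᵥ φ t) = M *ᵥ ((∑ t, vecMulVec (φ t) (φ t)) *ᵥ x) := by
  simp [sum_mulVec, mulVec_sum, vecMulVec_mulVec, mulVec_smul, dotProduct_comm]

theorem stmt8_general {p k n : ℕ}
    (U₁ : Matrix (Fin p) (Fin k) ℝ)
    (φ : Fin n → Fin p → ℝ) (ε : Fin n → ℝ)
    (β : Fin p → ℝ) (hβ : β = (U₁ * U₁ᵀ).mulVec β)
    (δ : Fin n → Fin p → ℝ)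
    (r : Fin n → ℝ) (hr : ∀ t, r t = φ t ⬝ᵥ (β + δ t) + ε t)
    (Shat : Matrix (Fin p) (Fin p) ℝ) (hShat : Shat = ∑ t, vecMulVec (φ t) (φ t))
    (Stil : Matrix (Fin k) (Fin k) ℝ) (hStil : Stil = U₁ᵀ * Shat * U₁)
    (hinv : IsUnit Stil)
    (βhat : Fin p → ℝ)
    (hβhat : βhat = U₁.mulVec (Stil⁻¹.mulVec (∑ t, r t • U₁ᵀ.mulVec (φ t)))) :
    wnorm Shat (βhat - β)
      ≤ wnorm Stil⁻¹ (∑ t, (φ t ⬝ᵥ δ t) • U₁ᵀ.mulVec (φ t))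
        + wnorm Stil⁻¹ (∑ t, ε t • U₁ᵀ.mulVec (φ t)) := by
  set vδ := ∑ t, (φ t ⬝ᵥ δ t) • U₁ᵀ *ᵥ φ t
  set vε := ∑ t, ε t • U₁ᵀ *ᵥ φ t
  have hStil_psd : Stil.PosSemidef := by
    simpa [hStil] using (hShat ▸ posSemidef_sum_vecMulVec_self φ).conjTranspose_mul_mul_same U₁
  have hsignal : Stil *ᵥ (U₁ᵀ *ᵥ β) = ∑ t, (φ t ⬝ᵥ β) • U₁ᵀ *ᵥ φ t := by
    rw [sum_dotProduct_smul_mulVec, ← hShat, hStil, ← mulVec_mulVec, mulVec_mulVec _ U₁, ← hβ,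
      mulVec_mulVec]
  have hresponse : ∑ t, r t • U₁ᵀ *ᵥ φ t = Stil *ᵥ (U₁ᵀ *ᵥ β) + (vδ + vε) := by
    simp only [hr, dotProduct_add, add_smul, Finset.sum_add_distrib, hsignal, add_assoc, vδ, vε]
  have herror : βhat - β = U₁ *ᵥ (Stil⁻¹ *ᵥ (vδ + vε)) := by
    rw [hβhat, hresponse, mulVec_add, mulVec_mulVec _ Stil⁻¹,
      nonsing_inv_mul _ ((isUnit_iff_isUnit_det Stil).mp hinv), one_mulVec, mulVec_add,
      mulVec_mulVec, ← hβ, add_sub_cancel_left]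
  calc wnorm Shat (βhat - β) = wnorm Stil⁻¹ (vδ + vε) := by
        rw [herror, ← wnorm_transpose_mul_mul, ← hStil,
          wnorm_nonsing_inv_mulVec (isHermitian_iff_isSymm.mp hStil_psd.isHermitian) hinv]
    _ ≤ wnorm Stil⁻¹ vδ + wnorm Stil⁻¹ vε := wnorm_add_le hStil_psd.inv vδ vε

/-- invariant-component error decomposition, known subspaces.
With `β` in the column span of `U₁`, `δ_t` in the column span of `U₂`,
`r_t = φ_tᵀ(β + δ_t) + ε_t`, `Σ̂ = ∑ φ_t φ_tᵀ`, `Σ̃ = U₁ᵀ Σ̂ U₁` invertible, and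
`β̂ = U₁ Σ̃⁻¹ ∑ U₁ᵀ φ_t r_t`, one has
`‖β̂ − β‖_{Σ̂} ≤ ‖∑ U₁ᵀ φ_t φ_tᵀ δ_t‖_{Σ̃⁻¹} + ‖∑ U₁ᵀ φ_t ε_t‖_{Σ̃⁻¹}`. -/
theorem stmt8 {p k n : ℕ} (hp : 1 ≤ p) (hk1 : 1 ≤ k) (hkp : k < p)
    (U₁ : Matrix (Fin p) (Fin k) ℝ) (U₂ : Matrix (Fin p) (Fin (p - k)) ℝ)
    (hU₁ : U₁ᵀ * U₁ = 1) (hU₂ : U₂ᵀ * U₂ = 1) (hU₁₂ : U₁ᵀ * U₂ = 0)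
    (φ : Fin n → Fin p → ℝ) (ε : Fin n → ℝ)
    (β : Fin p → ℝ) (hβ : β = (U₁ * U₁ᵀ).mulVec β)
    (δ : Fin n → Fin p → ℝ) (hδ : ∀ t, δ t = (U₂ * U₂ᵀ).mulVec (δ t))
    (r : Fin n → ℝ) (hr : ∀ t, r t = φ t ⬝ᵥ (β + δ t) + ε t)
    (Shat : Matrix (Fin p) (Fin p) ℝ) (hShat : Shat = ∑ t, vecMulVec (φ t) (φ t))
    (Stil : Matrix (Fin k) (Fin k) ℝ) (hStil : Stil = U₁ᵀ * Shat * U₁)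
    (hinv : IsUnit Stil)
    (βhat : Fin p → ℝ)
    (hβhat : βhat = U₁.mulVec (Stil⁻¹.mulVec (∑ t, r t • U₁ᵀ.mulVec (φ t)))) :
    wnorm Shat (βhat - β)
      ≤ wnorm Stil⁻¹ (∑ t, (φ t ⬝ᵥ δ t) • U₁ᵀ.mulVec (φ t))
        + wnorm Stil⁻¹ (∑ t, ε t • U₁ᵀ.mulVec (φ t)) :=
  stmt8_general U₁ φ ε β hβ δ r hr Shat hShat Stil hStil hinv βhat hβhat
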